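/- arXiv:2007.14532 — 4 statements merged into one kernel-verified Lean document; each statement's English description precedes it below -/
import Mathlib

section
/- Let E, F and W be finite-dimensional real inner product spaces, and let m, ℓ, ℓ′ be positive integers. For each multi-index β ∈ ℕ^m with |β| = ℓ let B_β : E → F be linear with symbol L(ξ) := ∑_{|β|=ℓ} ξ^β B_β, and for each multi-index β′ ∈ ℕ^m with |β′| = ℓ′ let M_{β′} : F → W be linear with symbol M(ξ) := ∑_{|β′|=ℓ′} ξ^{β′} M_{β′}. If ⋂_{ξ ∈ ℝ^m} ker L(ξ) = {0} and there exists ξ₀ ∈ ℝ^m such that M(ξ₀) is injective, then ⋂_{ξ ∈ ℝ^m} ker (M(ξ) ∘ L(ξ)) = {0}. -/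
open Finset

/-- The symbol `L(ξ) = ∑_{|β|=ℓ} ξ^β B_β` of a family of linear maps indexed by
multi-indices `β ∈ ℕ^m` with `|β| = ℓ`. -/
noncomputable def symbolOf {E F : Type*} [NormedAddCommGroup E] [InnerProductSpace ℝ E]
    [NormedAddCommGroup F] [InnerProductSpace ℝ F]
    (m ℓ : ℕ) (B : (Fin m → ℕ) → E →ₗ[ℝ] F) (ξ : Fin m → ℝ) : E →ₗ[ℝ] F :=
  ∑ β ∈ Finset.Nat.antidiagonalTuple m ℓ, (∏ i, ξ i ^ β i) • B β

/-!
The symbol `M(ξ)` depends continuously on `ξ`, so it stays injective on a neighbourhood of `ξ₀`,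
and there `M(ξ) L(ξ) x = 0` forces `L(ξ) x = 0`. As `ξ ↦ L(ξ) x` is polynomial, hence analytic
on the connected space `ℝ^m`, it then vanishes identically, so `x = 0` by cocancellation of `L`.
-/

section

variable {E F W : Type*} [NormedAddCommGroup E] [InnerProductSpace ℝ E]
  [NormedAddCommGroup F] [InnerProductSpace ℝ F] [NormedAddCommGroup W] [InnerProductSpace ℝ W]
  {m ℓ : ℕ}

theorem analyticOnNhd_monomial (β : Fin m → ℕ) :
    AnalyticOnNhd ℝ (fun ξ : Fin m → ℝ ↦ ∏ i, ξ i ^ β i) Set.univ :=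
  Finset.analyticOnNhd_fun_prod _ fun i _ ↦
    ((ContinuousLinearMap.proj i : (Fin m → ℝ) →L[ℝ] ℝ).analyticOnNhd _).pow _

theorem symbolOf_apply (B : (Fin m → ℕ) → E →ₗ[ℝ] F) (ξ : Fin m → ℝ) (x : E) :
    symbolOf m ℓ B ξ x = ∑ β ∈ Finset.Nat.antidiagonalTuple m ℓ, (∏ i, ξ i ^ β i) • B β x := by
  simp [symbolOf]

theorem analyticOnNhd_symbolOf_apply (B : (Fin m → ℕ) → E →ₗ[ℝ] F) (x : E) :
    AnalyticOnNhd ℝ (fun ξ ↦ symbolOf m ℓ B ξ x) Set.univ := by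
  simp only [symbolOf_apply]
  exact Finset.analyticOnNhd_fun_sum _ fun β _ ↦
    (analyticOnNhd_monomial β).smul analyticOnNhd_const

theorem continuous_toContinuousLinearMap_symbolOf [FiniteDimensional ℝ E]
    (B : (Fin m → ℕ) → E →ₗ[ℝ] F) :
    Continuous fun ξ ↦ LinearMap.toContinuousLinearMap (symbolOf m ℓ B ξ) := by
  simp only [symbolOf, map_sum, map_smul]
  exact continuous_finsetSum _ fun β _ ↦ by fun_prop

theorem symbolOf_apply_eq_zero_of_comp [FiniteDimensional ℝ F] {ℓ' : ℕ}
    {B : (Fin m → ℕ) → E →ₗ[ℝ] F} {M : (Fin m → ℕ) → F →ₗ[ℝ] W} {ξ₀ : Fin m → ℝ}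
    (hξ₀ : Function.Injective (symbolOf m ℓ' M ξ₀)) {x : E}
    (hx : ∀ ξ, symbolOf m ℓ' M ξ (symbolOf m ℓ B ξ x) = 0) (ξ : Fin m → ℝ) :
    symbolOf m ℓ B ξ x = 0 := by
  have hinj : ∀ᶠ η in nhds ξ₀, Function.Injective (symbolOf m ℓ' M η) :=
    (ContinuousLinearMap.isOpen_injective.preimage
      (continuous_toContinuousLinearMap_symbolOf M)).mem_nhds hξ₀
  have hzero : (fun η ↦ symbolOf m ℓ B η x) =ᶠ[nhds ξ₀] 0 :=
    hinj.mono fun η hη ↦ hη <| (hx η).trans (map_zero _).symm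
  exact (analyticOnNhd_symbolOf_apply B x).eqOn_zero_of_preconnected_of_eventuallyEq_zero
    isPreconnected_univ (Set.mem_univ ξ₀) hzero (Set.mem_univ ξ)

end

theorem stmt2_general {E F W : Type*} [NormedAddCommGroup E] [InnerProductSpace ℝ E]
    [NormedAddCommGroup F] [InnerProductSpace ℝ F]
    [FiniteDimensional ℝ F] [NormedAddCommGroup W] [InnerProductSpace ℝ W]
    (m ℓ ℓ' : ℕ)
    (B : (Fin m → ℕ) → E →ₗ[ℝ] F) (M : (Fin m → ℕ) → F →ₗ[ℝ] W)
    (hL : (⨅ ξ : Fin m → ℝ, LinearMap.ker (symbolOf m ℓ B ξ)) = ⊥)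
    (hM : ∃ ξ₀ : Fin m → ℝ, Function.Injective ⇑(symbolOf m ℓ' M ξ₀)) :
    (⨅ ξ : Fin m → ℝ,
      LinearMap.ker ((symbolOf m ℓ' M ξ).comp (symbolOf m ℓ B ξ))) = ⊥ := by
  obtain ⟨ξ₀, hξ₀⟩ := hM
  refine eq_bot_iff.2 fun x hx ↦ hL ▸ ?_
  simp only [Submodule.mem_iInf, LinearMap.mem_ker, LinearMap.comp_apply] at hx ⊢
  exact symbolOf_apply_eq_zero_of_comp hξ₀ hx

/-- Post-composition with a symbol that is injective at one point preserves
cocancellation. -/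
theorem stmt2 {E F W : Type*} [NormedAddCommGroup E] [InnerProductSpace ℝ E]
    [FiniteDimensional ℝ E] [NormedAddCommGroup F] [InnerProductSpace ℝ F]
    [FiniteDimensional ℝ F] [NormedAddCommGroup W] [InnerProductSpace ℝ W]
    [FiniteDimensional ℝ W]
    (m ℓ ℓ' : ℕ) (hm : 0 < m) (hℓ : 0 < ℓ) (hℓ' : 0 < ℓ')
    (B : (Fin m → ℕ) → E →ₗ[ℝ] F) (M : (Fin m → ℕ) → F →ₗ[ℝ] W)
    (hL : (⨅ ξ : Fin m → ℝ, LinearMap.ker (symbolOf m ℓ B ξ)) = ⊥)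
    (hM : ∃ ξ₀ : Fin m → ℝ, Function.Injective ⇑(symbolOf m ℓ' M ξ₀)) :
    (⨅ ξ : Fin m → ℝ,
      LinearMap.ker ((symbolOf m ℓ' M ξ).comp (symbolOf m ℓ B ξ))) = ⊥ :=
  stmt2_general m ℓ ℓ' B M hL hM
end

section
/- Let m and ℓ be positive integers and let U be a nonempty open subset of ℝ^m. Then there exist vectors v_1, …, v_{m+ℓ−1} ∈ ℝ^m with the following properties: (i) any m distinct vectors among v_1, …, v_{m+ℓ−1} are linearly independent; (ii) for every ℓ-element subset S of {1, …, m+ℓ−1} there exists ξ_S ∈ U that is orthogonal to v_i for every i ∉ S; and (iii) the polynomials p_S(ξ) := ∏_{i ∈ S} ⟨v_i, ξ⟩, where S ranges over the ℓ-element subsets of {1, …, m+ℓ−1}, form a basis of the real vector space of homogeneous polynomials of degree ℓ in the variables ξ_1, …, ξ_m. -/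
open Finset
open scoped RealInnerProductSpace Topology

/-!
Take distinct real nodes `a_i` and the moment vectors `(1, a_i, …, a_i^{m-1})`; any `m` of them
are linearly independent by Vandermonde. For a set `T` of `m - 1` indices, the coefficient vector of
`∏_{j ∈ T} (X - a_j)` pairs with the `i`-th moment vector to the value of that polynomial at `a_i`,
which vanishes exactly when `i ∈ T`. Shrinking the nodes to `t a_i` replaces the coefficient vector
by that of the root-scaled polynomial, which tends to `e_{m-1}` as `t → 0` since the polynomial is
monic of degree `m - 1`. After a reflection taking a multiple of `e_{m-1}` to a point of `U`, all
these dual points lie in `U` for small `t ≠ 0`. Evaluating the products `p_S` at the dual point of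
`Sᶜ` gives a diagonal pairing, so they are linearly independent, and there are `C(m+ℓ-1, ℓ)` of
them, the dimension of the homogeneous polynomials of degree `ℓ`.
-/

theorem linearIndependent_of_apply_ne_zero_of_apply_eq_zero {ι R M : Type*} [CommRing R]
    [NoZeroDivisors R] [AddCommGroup M] [Module R M] {f : ι → M} (φ : ι → M →ₗ[R] R)
    (hdiag : ∀ i, φ i (f i) ≠ 0) (hoff : ∀ i j, i ≠ j → φ i (f j) = 0) :
    LinearIndependent R f := by
  classical
  refine linearIndependent_iff'.mpr fun s g hg i hi => ?_
  have hφ := congrArg (φ i) hg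
  rw [map_sum, map_zero, sum_eq_single i
    (fun j _ hji => by rw [map_smul, hoff i j hji.symm, smul_zero]) (absurd hi), map_smul] at hφ
  exact (smul_eq_zero.mp hφ).resolve_right (hdiag i)

namespace MvPolynomial

variable {σ R : Type*}

instance finiteDimensional_homogeneousSubmodule [Finite σ] [Field R] (n : ℕ) :
    FiniteDimensional R (homogeneousSubmodule σ R n) :=
  Module.Finite.iff_fg.mpr (homogeneousSubmodule_fg σ R n)

theorem finrank_homogeneousSubmodule [Fintype σ] [Field R] (n : ℕ) :
    Module.finrank R (homogeneousSubmodule σ R n) = (Fintype.card σ + n - 1).choose n := by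
  classical
  have hdeg : {d : σ →₀ ℕ | d.degree = n} = ↑((univ : Finset σ).finsuppAntidiag n) := by
    ext d
    simp [mem_finsuppAntidiag, Finsupp.degree_eq_sum]
  rw [((LinearEquiv.ofEq _ _ (homogeneousSubmodule_eq_finsupp_supported σ R n)).trans
      (AddMonoidAlgebra.supportedEquivFinsupp _)).finrank_eq, hdeg, Module.finrank_finsupp_self]
  simp [card_finsuppAntidiag_nat_eq_choose]

section CommRing

variable [Fintype σ] [CommRing R]

theorem eval_sum_C_mul_X (v ξ : σ → R) : eval ξ (∑ j, C (v j) * X j) = v ⬝ᵥ ξ := by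
  simp [dotProduct]

theorem isHomogeneous_sum_C_mul_X (v : σ → R) : (∑ j, C (v j) * X j).IsHomogeneous 1 :=
  IsHomogeneous.sum _ _ _ fun j _ => isHomogeneous_C_mul_X (v j) j

theorem isHomogeneous_prod_sum_C_mul_X {ι : Type*} (v : ι → σ → R) (S : Finset ι) :
    (∏ i ∈ S, ∑ j, C (v i j) * X j).IsHomogeneous S.card := by
  simpa using IsHomogeneous.prod S _ (fun _ => 1) fun i _ => isHomogeneous_sum_C_mul_X (v i)

theorem linearIndependent_prod_sum_C_mul_X [IsDomain R] {ι : Type*} {ℓ : ℕ} (v : ι → σ → R)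
    (ξ : {S : Finset ι // S.card = ℓ} → σ → R) (hξ : ∀ S i, v i ⬝ᵥ ξ S = 0 ↔ i ∉ S.1) :
    LinearIndependent R
      fun S : {S : Finset ι // S.card = ℓ} => ∏ i ∈ S.1, ∑ j, C (v i j) * X j := by
  refine linearIndependent_of_apply_ne_zero_of_apply_eq_zero
    (fun S => (aeval (ξ S)).toLinearMap) (fun S => ?_) (fun S S' hSS' => ?_)
  · simp only [AlgHom.toLinearMap_apply, aeval_eq_eval, map_prod, eval_sum_C_mul_X]
    exact prod_ne_zero_iff.mpr fun i hi => (hξ S i).not.mpr (not_not.mpr hi)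
  · obtain ⟨i, hiS', hiS⟩ : ∃ i ∈ S'.1, i ∉ S.1 :=
      not_subset.mp fun h => hSS' (Subtype.ext (eq_of_subset_of_card_le h (by rw [S.2, S'.2]))).symm
    simp only [AlgHom.toLinearMap_apply, aeval_eq_eval, map_prod, eval_sum_C_mul_X]
    exact prod_eq_zero hiS' ((hξ S i).mpr hiS)

end CommRing

theorem span_prod_sum_C_mul_X [Fintype σ] [Field R] {ι : Type*} [Fintype ι] {ℓ : ℕ}
    (hι : Fintype.card ι = Fintype.card σ + ℓ - 1) (v : ι → σ → R)
    (hli : LinearIndependent R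
      fun S : {S : Finset ι // S.card = ℓ} => ∏ i ∈ S.1, ∑ j, C (v i j) * X j) :
    Submodule.span R (Set.range
      fun S : {S : Finset ι // S.card = ℓ} => ∏ i ∈ S.1, ∑ j, C (v i j) * X j) =
      homogeneousSubmodule σ R ℓ := by
  refine Submodule.eq_of_le_of_finrank_le (Submodule.span_le.mpr ?_) ?_
  · rintro _ ⟨S, rfl⟩
    simpa [S.2] using isHomogeneous_prod_sum_C_mul_X v S.1
  · rw [finrank_span_eq_card hli, finrank_homogeneousSubmodule, Fintype.card_finset_len, hι]

end MvPolynomial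

section MomentCurve

open Polynomial

noncomputable def momentVector (m : ℕ) (x : ℝ) : EuclideanSpace ℝ (Fin m) :=
  WithLp.toLp 2 fun k => x ^ (k : ℕ)

noncomputable def coeffVector (m : ℕ) (p : ℝ[X]) : EuclideanSpace ℝ (Fin m) :=
  WithLp.toLp 2 fun k => p.coeff k

theorem inner_momentVector_coeffVector {m : ℕ} {p : ℝ[X]} (hp : p.natDegree < m) (x : ℝ) :
    ⟪momentVector m x, coeffVector m p⟫ = p.eval x := by
  rw [eval_eq_sum_range' hp, ← Fin.sum_univ_eq_sum_range]
  simp [momentVector, coeffVector, PiLp.inner_apply, mul_comm]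

theorem inner_momentVector_coeffVector_scaleRoots {m : ℕ} {p : ℝ[X]} (hp : p.natDegree < m)
    (t x : ℝ) :
    ⟪momentVector m (t * x), coeffVector m (p.scaleRoots t)⟫ = t ^ p.natDegree * p.eval x := by
  rw [inner_momentVector_coeffVector (by rwa [natDegree_scaleRoots]), scaleRoots_eval_mul]

theorem linearIndependent_momentVector {ι : Type*} {a : ι → ℝ} (ha : Function.Injective a)
    {m : ℕ} {s : Finset ι} (hs : s.card = m) :
    LinearIndependent ℝ fun i : s => momentVector m (a i) := by
  let e : Fin m ≃ s := (finCongr hs.symm).trans s.equivFin.symm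
  have hrows : LinearIndependent ℝ (Matrix.vandermonde fun k => a (e k)).row :=
    Matrix.linearIndependent_rows_iff_isUnit.mpr <| (Matrix.isUnit_iff_isUnit_det _).mpr <|
      isUnit_iff_ne_zero.mpr <| Matrix.det_vandermonde_ne_zero_iff.mpr <|
        ha.comp (Subtype.val_injective.comp e.injective)
  exact (linearIndependent_equiv e).mp (hrows.map' (WithLp.linearEquiv 2 ℝ _).symm.toLinearMap
    (LinearEquiv.ker _))

theorem continuous_coeffVector_scaleRoots (m : ℕ) (p : ℝ[X]) :
    Continuous fun t => coeffVector m (p.scaleRoots t) :=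
  (PiLp.continuous_toLp 2 _).comp <| continuous_pi fun k => by
    simp only [coeff_scaleRoots]
    fun_prop

theorem coeffVector_scaleRoots_zero {n : ℕ} {p : ℝ[X]} (hp : p.Monic) (hdeg : p.natDegree = n) :
    coeffVector (n + 1) (p.scaleRoots 0) = EuclideanSpace.single (Fin.last n) 1 := by
  ext k
  simp [coeffVector, hp.leadingCoeff, hdeg, coeff_X_pow, Fin.ext_iff, eq_comm]

theorem exists_ne_zero_forall_mem {κ X : Type*} [Finite κ] [TopologicalSpace X]
    {f : κ → ℝ → X} {U : Set X} (hU : IsOpen U) (hf : ∀ k, ContinuousAt (f k) 0)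
    (h0 : ∀ k, f k 0 ∈ U) : ∃ t ≠ 0, ∀ k, f k t ∈ U := by
  have hnear : ∀ᶠ t in 𝓝[≠] 0, ∀ k, f k t ∈ U :=
    (Filter.eventually_all.mpr fun k => (hf k).eventually_mem (hU.mem_nhds (h0 k))).filter_mono
      nhdsWithin_le_nhds
  exact (eventually_mem_nhdsWithin.and hnear).exists

theorem exists_vectors_inner_eq_zero_iff {ι : Type*} [Finite ι] {m : ℕ} (hm : 0 < m)
    {U : Set (EuclideanSpace ℝ (Fin m))} (hU : U.Nonempty) (hUopen : IsOpen U) :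
    ∃ v : ι → EuclideanSpace ℝ (Fin m),
      (∀ s : Finset ι, s.card = m → LinearIndependent ℝ fun i : s => v i) ∧
      ∀ T : Finset ι, T.card = m - 1 → ∃ ξ ∈ U, ∀ i, ⟪v i, ξ⟫ = 0 ↔ i ∈ T := by
  obtain ⟨n, rfl⟩ := Nat.exists_eq_add_one_of_ne_zero hm.ne'
  obtain ⟨ξ₀, hξ₀U, hξ₀ : ξ₀ ≠ 0⟩ := (dense_compl_singleton 0).inter_open_nonempty U hUopen hU
  obtain ⟨a, ha⟩ := Countable.exists_injective_nat ι
  let e : EuclideanSpace ℝ (Fin (n + 1)) := ‖ξ₀‖ • EuclideanSpace.single (Fin.last n) 1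
  let Q := (ℝ ∙ (e - ξ₀))ᗮ.reflection
  have hQ : Q e = ξ₀ := Submodule.reflection_sub (by simp [e, norm_smul])
  let P : Finset ι → ℝ[X] := fun T => ∏ j ∈ T, (X - C (a j : ℝ))
  have hPdeg : ∀ T, (P T).natDegree = T.card := fun T => natDegree_finsetProd_X_sub_C_eq_card _ _
  have hPmonic : ∀ T, (P T).Monic := fun T => monic_prod_of_monic _ _ fun j _ => monic_X_sub_C _
  let ξ : {T : Finset ι // T.card = n} → ℝ → EuclideanSpace ℝ (Fin (n + 1)) :=
    fun T t => Q (‖ξ₀‖ • coeffVector (n + 1) ((P T).scaleRoots t))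
  obtain ⟨t, ht, hξU⟩ : ∃ t ≠ 0, ∀ T, ξ T t ∈ U := by
    refine exists_ne_zero_forall_mem hUopen (fun T => ?_) fun T => ?_
    · have := continuous_coeffVector_scaleRoots (n + 1) (P T)
      fun_prop
    · convert hξ₀U using 1
      rw [← hQ]
      exact congrArg (Q <| ‖ξ₀‖ • ·) (coeffVector_scaleRoots_zero (hPmonic T) ((hPdeg T).trans T.2))
  refine ⟨fun i => Q (momentVector (n + 1) (t * a i)), fun s hs => ?_, fun T hT => ?_⟩
  · exact (linearIndependent_momentVector ((mul_right_injective₀ ht).comp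
      (Nat.cast_injective.comp ha)) hs).map' _ Q.toLinearEquiv.ker
  · refine ⟨ξ ⟨T, hT⟩ t, hξU _, fun i => ?_⟩
    simp only [ξ, LinearIsometryEquiv.inner_map_map, inner_smul_right]
    rw [inner_momentVector_coeffVector_scaleRoots (by rw [hPdeg]; omega)]
    simp [P, eval_prod, prod_eq_zero_iff, ht, hξ₀, sub_eq_zero, ha.eq_iff]

end MomentCurve

theorem stmt4_general (m ℓ : ℕ) (hm : 0 < m)
    (U : Set (EuclideanSpace ℝ (Fin m))) (hU : U.Nonempty) (hUopen : IsOpen U) :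
    ∃ v : Fin (m + ℓ - 1) → EuclideanSpace ℝ (Fin m),
      (∀ s : Finset (Fin (m + ℓ - 1)), s.card = m →
        LinearIndependent ℝ (fun i : s => v i.1)) ∧
      (∀ S : Finset (Fin (m + ℓ - 1)), S.card = ℓ →
        ∃ ξ ∈ U, ∀ i ∉ S, ⟪v i, ξ⟫ = 0) ∧
      (LinearIndependent ℝ
          (fun S : {S : Finset (Fin (m + ℓ - 1)) // S.card = ℓ} =>
            ∏ i ∈ S.1, ∑ j, MvPolynomial.C (v i j) * MvPolynomial.X j) ∧
        Submodule.span ℝ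
            (Set.range (fun S : {S : Finset (Fin (m + ℓ - 1)) // S.card = ℓ} =>
              ∏ i ∈ S.1, ∑ j, MvPolynomial.C (v i j) * MvPolynomial.X j)) =
          MvPolynomial.homogeneousSubmodule (Fin m) ℝ ℓ) := by
  obtain ⟨v, hv_indep, hv_dual⟩ :=
    exists_vectors_inner_eq_zero_iff (ι := Fin (m + ℓ - 1)) hm hU hUopen
  have hcompl : ∀ S : Finset (Fin (m + ℓ - 1)), S.card = ℓ → Sᶜ.card = m - 1 := fun S hS => by
    rw [card_compl, Fintype.card_fin, hS]
    omega
  choose ξ hξU hξ using fun S : {S : Finset (Fin (m + ℓ - 1)) // S.card = ℓ} =>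
    hv_dual _ (hcompl S.1 S.2)
  have hli := MvPolynomial.linearIndependent_prod_sum_C_mul_X (fun i => (v i).ofLp)
    (fun S => (ξ S).ofLp) fun S i => by
      rw [dotProduct_comm, ← star_trivial (v i).ofLp, ← EuclideanSpace.inner_eq_star_dotProduct,
        hξ S i, mem_compl]
  refine ⟨v, hv_indep, fun S hS => ?_, hli, MvPolynomial.span_prod_sum_C_mul_X (by simp) _ hli⟩
  exact ⟨ξ ⟨S, hS⟩, hξU _, fun i hi => (hξ _ i).mpr (mem_compl.mpr hi)⟩

/-- Given a nonempty open set `U ⊆ ℝ^m`, one can choose `m + ℓ - 1` vectors in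
general position such that: any `m` of them are linearly independent; for any
`ℓ`-element subset `S` of the index set there is a point of `U` orthogonal to
all vectors whose index is not in `S`; and the products `∏_{i ∈ S} ⟨v_i, ξ⟩`
form a basis of the homogeneous polynomials of degree `ℓ` in `m` variables. -/
theorem stmt4 (m ℓ : ℕ) (hm : 0 < m) (hℓ : 0 < ℓ)
    (U : Set (EuclideanSpace ℝ (Fin m))) (hU : U.Nonempty) (hUopen : IsOpen U) :
    ∃ v : Fin (m + ℓ - 1) → EuclideanSpace ℝ (Fin m),
      (∀ s : Finset (Fin (m + ℓ - 1)), s.card = m →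
        LinearIndependent ℝ (fun i : s => v i.1)) ∧
      (∀ S : Finset (Fin (m + ℓ - 1)), S.card = ℓ →
        ∃ ξ ∈ U, ∀ i ∉ S, ⟪v i, ξ⟫ = 0) ∧
      (LinearIndependent ℝ
          (fun S : {S : Finset (Fin (m + ℓ - 1)) // S.card = ℓ} =>
            ∏ i ∈ S.1, ∑ j, MvPolynomial.C (v i j) * MvPolynomial.X j) ∧
        Submodule.span ℝ
            (Set.range (fun S : {S : Finset (Fin (m + ℓ - 1)) // S.card = ℓ} =>
              ∏ i ∈ S.1, ∑ j, MvPolynomial.C (v i j) * MvPolynomial.X j)) =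
          MvPolynomial.homogeneousSubmodule (Fin m) ℝ ℓ) :=
  stmt4_general m ℓ hm U hU hUopen
end

section
/- Let n ≥ 2 be an integer. There is a constant C = C(n) such that for all smooth compactly supported functions u_1, …, u_n : ℝⁿ → ℝ, ∑_{j=1}^{n} ‖u_j‖_{L^{n/(n−1)}(ℝⁿ)} ≤ C ∑_{i=1}^{n} ∑_{j=1}^{n} ‖∂_i u_j + ∂_j u_i‖_{L¹(ℝⁿ)}. -/
/-!
With `F = ∑ₖₗ |∂ₖuₗ + ∂ₗuₖ|`, every `uⱼ` is controlled by line integrals of `F`: along `eⱼ`,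
since `2 ∂ⱼuⱼ` is an entry of the symmetric gradient, and for `i ≠ j`, through
`|uⱼ| ≤ |uᵢ + uⱼ| + |uᵢ|`, along `eᵢ + eⱼ` and `eᵢ`, since twice the derivative of `uᵢ + uⱼ` in the
direction `eᵢ + eⱼ` is the sum of the symmetric gradient over `{i, j}²`. Multiplying these `n`
bounds as in Gagliardo's proof of the Sobolev inequality and expanding the product gives
`2ⁿ⁻¹` terms, each a Gagliardo product along the columns of a shear `y ↦ y + (∑_{i ∈ S} yᵢ) eⱼ`
with `j ∉ S`. A shear has determinant one, so the Loomis–Whitney–Gagliardo inequality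
bounds each term by `‖F‖₁^{n/(n-1)}`.
-/

open MeasureTheory Finset
open scoped ENNReal

noncomputable section

theorem Finset.mul_prod_erase_add_eq_sum_powerset {ι R : Type*} [CommSemiring R] [Fintype ι]
    [DecidableEq ι] (f g : ι → R) (j : ι) :
    g j * ∏ i ∈ univ.erase j, (f i + g i) =
      ∑ S ∈ (univ.erase j).powerset, ∏ i, S.piecewise f g i := by
  rw [prod_add, mul_sum]
  refine sum_congr rfl fun S hS => ?_
  have hjS : j ∉ S := fun h => by simpa using mem_powerset.mp hS h
  rw [prod_piecewise, univ_inter, ← mul_prod_erase (univ \ S) g (by simpa using hjS),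
    ← erase_sdiff_comm]
  ring

theorem ENNReal.rpow_le_sum_powerset_prod_piecewise {ι : Type*} [Fintype ι] [DecidableEq ι]
    {p : ℝ} (hp0 : 0 ≤ p) (hp1 : p ≤ 1) {a : ℝ≥0∞} {b c : ι → ℝ≥0∞} (j : ι) (hj : a ≤ c j)
    (hi : ∀ i ≠ j, a ≤ b i + c i) :
    a ^ (Fintype.card ι * p) ≤ ∑ S ∈ (univ.erase j).powerset, ∏ i, S.piecewise b c i ^ p := by
  have hpow : a ^ (Fintype.card ι * p) = ∏ _i : ι, a ^ p := by
    rw [prod_const, card_univ, ← ENNReal.rpow_natCast, ← ENNReal.rpow_mul, mul_comm]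
  calc a ^ (Fintype.card ι * p)
      = a ^ p * ∏ i ∈ univ.erase j, a ^ p := by
        rw [hpow, mul_prod_erase univ (fun _ => a ^ p) (mem_univ j)]
    _ ≤ c j ^ p * ∏ i ∈ univ.erase j, (b i ^ p + c i ^ p) := by
        gcongr with i hij
        calc a ^ p ≤ (b i + c i) ^ p := by gcongr; exact hi i (ne_of_mem_erase hij)
          _ ≤ b i ^ p + c i ^ p := ENNReal.rpow_add_le_add_rpow _ _ hp0 hp1
    _ = ∑ S ∈ (univ.erase j).powerset, ∏ i, S.piecewise b c i ^ p := by
        rw [mul_prod_erase_add_eq_sum_powerset (fun i => b i ^ p) (fun i => c i ^ p)]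
        refine sum_congr rfl fun S _ => prod_congr rfl fun i _ => ?_
        by_cases hi : i ∈ S <;> simp [hi]

section Line

variable {E : Type*} [NormedAddCommGroup E] [NormedSpace ℝ E]

def lineLIntegral (F : E → ℝ≥0∞) (d x : E) : ℝ≥0∞ := ∫⁻ t : ℝ, F (x + t • d)

theorem lineLIntegral_mono {F G : E → ℝ≥0∞} (h : ∀ y, F y ≤ G y) (d x : E) :
    lineLIntegral F d x ≤ lineLIntegral G d x :=
  lintegral_mono fun _ => h _

theorem measurable_lineLIntegral [MeasurableSpace E] [BorelSpace E] [SecondCountableTopology E]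
    {F : E → ℝ≥0∞} (hF : Measurable F) (d : E) : Measurable (lineLIntegral F d) :=
  (hF.comp (by fun_prop : Continuous fun p : E × ℝ => p.1 + p.2 • d).measurable
    ).lintegral_prod_right'

theorem enorm_le_lineLIntegral_enorm_fderiv {w : E → ℝ} (hw : ContDiff ℝ 1 w)
    (hws : HasCompactSupport w) {d : E} (hd : d ≠ 0) (x : E) :
    ‖w x‖ₑ ≤ lineLIntegral (fun y => ‖fderiv ℝ w y d‖ₑ) d x := by
  set g : ℝ → ℝ := w ∘ fun t => x + t • d
  have hline : Topology.IsClosedEmbedding fun t : ℝ => x + t • d :=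
    (Homeomorph.addLeft x).isClosedEmbedding.comp (isClosedEmbedding_smul_left hd)
  have hderiv (t : ℝ) : deriv g t = fderiv ℝ w (x + t • d) d := by
    have := ((hw.differentiable one_ne_zero _).hasFDerivAt.comp_hasDerivAt t
      (((hasDerivAt_id t).smul_const d).const_add x))
    simpa using this.deriv
  calc ‖w x‖ₑ = ‖∫ t in Set.Iic 0, deriv g t‖ₑ := by
        rw [(hws.comp_isClosedEmbedding hline).integral_Iic_deriv_eq (hw.comp (by fun_prop))]
        simp
    _ ≤ ∫⁻ t in Set.Iic 0, ‖deriv g t‖ₑ := enorm_integral_le_lintegral_enorm _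
    _ ≤ ∫⁻ t, ‖deriv g t‖ₑ := setLIntegral_le_lintegral _ _
    _ = _ := by simp only [hderiv]; rfl

theorem lineLIntegral_map_single {ι : Type*} [DecidableEq ι] (T : (ι → ℝ) →ₗ[ℝ] E)
    (F : E → ℝ≥0∞) (y : ι → ℝ) (i : ι) :
    lineLIntegral F (T (Pi.single i 1)) (T y) = ∫⁻ t, F (T (Function.update y i t)) := by
  have hupdate (s : ℝ) : y + s • Pi.single i 1 = Function.update y i (s + y i) := by
    ext k
    by_cases hk : k = i <;> simp [hk, add_comm]
  simp only [lineLIntegral, ← map_smul, ← map_add, hupdate]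
  exact lintegral_add_right_eq_self (fun t => F (T (Function.update y i t))) (y i)

/-- The substitution `x = T y` turns the lines in the directions `T eᵢ` into coordinate lines,
to which Gagliardo's inequality applies. -/
theorem lintegral_prod_lineLIntegral_rpow_le {ι : Type*} [Fintype ι] [DecidableEq ι]
    [MeasureSpace E] [BorelSpace E] [SecondCountableTopology E]
    {p : ℝ} (hp : Real.HolderConjugate (Fintype.card ι) p)
    {T : (ι → ℝ) →ₗ[ℝ] E} (hT : MeasurePreserving T) {F : E → ℝ≥0∞} (hF : Measurable F) :
    ∫⁻ x, ∏ i, lineLIntegral F (T (Pi.single i 1)) x ^ (1 / (Fintype.card ι - 1 : ℝ)) ≤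
      (∫⁻ x, F x) ^ p := by
  have hmeas : Measurable fun x => ∏ i, lineLIntegral F (T (Pi.single i 1)) x ^
      (1 / (Fintype.card ι - 1 : ℝ)) :=
    Finset.measurable_prod _ fun i _ => (measurable_lineLIntegral hF _).pow_const _
  rw [← hT.lintegral_comp hmeas, ← hT.lintegral_comp hF]
  simp only [lineLIntegral_map_single]
  exact lintegral_prod_lintegral_pow_le (μ := fun _ => volume) hp (hF.comp hT.measurable)

end Line

section Shear

variable {ι : Type*} [Fintype ι] [DecidableEq ι]

def shear (j : ι) (S : Finset ι) : (ι → ℝ) →ₗ[ℝ] ι → ℝ :=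
  Matrix.toLin' (1 + Matrix.vecMulVec (Pi.single j 1) fun i => if i ∈ S then 1 else 0)

theorem shear_single (j : ι) (S : Finset ι) (i : ι) :
    shear j S (Pi.single i 1) = Pi.single i 1 + if i ∈ S then Pi.single j 1 else 0 := by
  ext k
  simp only [shear, Matrix.toLin'_apply, Matrix.add_mulVec, Matrix.one_mulVec]
  split_ifs <;> simp [Matrix.vecMulVec, Pi.single_apply, *]

theorem det_shear {j : ι} {S : Finset ι} (hj : j ∉ S) : LinearMap.det (shear j S) = 1 := by
  rw [shear, LinearMap.det_toLin', Matrix.vecMulVec_eq Unit,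
    Matrix.det_one_add_replicateCol_mul_replicateRow]
  simp [dotProduct, Pi.single_apply, hj]

theorem measurePreserving_shear {j : ι} {S : Finset ι} (hj : j ∉ S) :
    MeasurePreserving (shear j S) := by
  refine ⟨(shear j S).continuous_of_finiteDimensional.measurable, ?_⟩
  rw [Real.map_linearMap_volume_pi_eq_smul_volume_pi (by simp [det_shear hj]), det_shear hj]
  simp

end Shear

section Euclidean

variable {ι : Type*} [Fintype ι] [DecidableEq ι]

theorem lintegral_rpow_le_of_le_lineLIntegral {p : ℝ}
    (hp : Real.HolderConjugate (Fintype.card ι) p) {F : EuclideanSpace ℝ ι → ℝ≥0∞}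
    (hF : Measurable F) {v : EuclideanSpace ℝ ι → ℝ≥0∞} (j : ι)
    (hvj : ∀ x, v x ≤ lineLIntegral F (EuclideanSpace.single j 1) x)
    (hvi : ∀ i ≠ j, ∀ x, v x ≤
      lineLIntegral F (EuclideanSpace.single i 1 + EuclideanSpace.single j 1) x +
        lineLIntegral F (EuclideanSpace.single i 1) x) :
    ∫⁻ x, v x ^ p ≤ 2 ^ (Fintype.card ι - 1) * (∫⁻ x, F x) ^ p := by
  set r : ℝ := 1 / (Fintype.card ι - 1 : ℝ)
  have hcard : (2 : ℝ) ≤ Fintype.card ι := by exact_mod_cast Nat.one_lt_cast.mp hp.lt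
  have hr0 : 0 ≤ r := div_nonneg zero_le_one (by linarith)
  have hr1 : r ≤ 1 := div_le_one_of_le₀ (by linarith) (by linarith)
  have hcard_r : Fintype.card ι * r = p := by rw [mul_one_div, hp.conjugate_eq]
  set T : Finset ι → (ι → ℝ) →ₗ[ℝ] EuclideanSpace ℝ ι :=
    fun S => (EuclideanSpace.equiv ι ℝ).symm.toLinearMap ∘ₗ shear j S
  have hpoint (x) : v x ^ p ≤
      ∑ S ∈ (univ.erase j).powerset, ∏ i, lineLIntegral F (T S (Pi.single i 1)) x ^ r := by
    have := ENNReal.rpow_le_sum_powerset_prod_piecewise hr0 hr1 j (hvj x) (fun i hi => hvi i hi x)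
    rw [hcard_r] at this
    refine this.trans_eq (sum_congr rfl fun S _ => prod_congr rfl fun i _ => ?_)
    by_cases hi : i ∈ S <;> simp [T, shear_single, hi]
  calc ∫⁻ x, v x ^ p
      ≤ ∫⁻ x, ∑ S ∈ (univ.erase j).powerset, ∏ i, lineLIntegral F (T S (Pi.single i 1)) x ^ r :=
        lintegral_mono hpoint
    _ = ∑ S ∈ (univ.erase j).powerset, ∫⁻ x, ∏ i, lineLIntegral F (T S (Pi.single i 1)) x ^ r :=
        lintegral_finsetSum _ fun S _ =>
          Finset.measurable_prod _ fun i _ => (measurable_lineLIntegral hF _).pow_const _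
    _ ≤ ∑ S ∈ (univ.erase j).powerset, (∫⁻ x, F x) ^ p := by
        refine sum_le_sum fun S hS => lintegral_prod_lineLIntegral_rpow_le hp ?_ hF
        have hjS : j ∉ S := fun h => by simpa using mem_powerset.mp hS h
        exact (PiLp.volume_preserving_toLp ι).comp (measurePreserving_shear hjS)
    _ = 2 ^ (Fintype.card ι - 1) * (∫⁻ x, F x) ^ p := by
        simp [card_powerset, card_erase_of_mem]

def symmGrad (u : ι → EuclideanSpace ℝ ι → ℝ) (i j : ι) (x : EuclideanSpace ℝ ι) : ℝ :=
  fderiv ℝ (u j) x (EuclideanSpace.single i 1) + fderiv ℝ (u i) x (EuclideanSpace.single j 1)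

def symmGradEnorm (u : ι → EuclideanSpace ℝ ι → ℝ) (x : EuclideanSpace ℝ ι) : ℝ≥0∞ :=
  ∑ k, ∑ l, ‖symmGrad u k l x‖ₑ

variable {u : ι → EuclideanSpace ℝ ι → ℝ}

theorem enorm_symmGrad_le_symmGradEnorm (k l : ι) (x : EuclideanSpace ℝ ι) :
    ‖symmGrad u k l x‖ₑ ≤ symmGradEnorm u x :=
  (single_le_sum (fun _ _ => zero_le) (mem_univ l)).trans
    (single_le_sum (f := fun k => ∑ l, ‖symmGrad u k l x‖ₑ) (fun _ _ => zero_le) (mem_univ k))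

theorem enorm_fderiv_single_le_symmGradEnorm (j : ι) (x : EuclideanSpace ℝ ι) :
    ‖fderiv ℝ (u j) x (EuclideanSpace.single j 1)‖ₑ ≤ symmGradEnorm u x := by
  refine le_trans ?_ (enorm_symmGrad_le_symmGradEnorm j j x)
  rw [symmGrad, ← two_mul, enorm_mul]
  exact le_mul_of_one_le_left' (by rw [Real.enorm_eq_ofReal_abs]; norm_num)

theorem two_mul_fderiv_add_eq_sum_symmGrad {i j : ι} (hij : i ≠ j) {x : EuclideanSpace ℝ ι}
    (hi : DifferentiableAt ℝ (u i) x) (hj : DifferentiableAt ℝ (u j) x) :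
    2 * fderiv ℝ (fun y => u i y + u j y) x
        (EuclideanSpace.single i 1 + EuclideanSpace.single j 1) =
      ∑ k ∈ {i, j}, ∑ l ∈ {i, j}, symmGrad u k l x := by
  simp only [sum_pair hij, symmGrad, fderiv_fun_add hi hj, FunLike.coe_add, Pi.add_apply, map_add]
  ring

theorem enorm_fderiv_add_le_symmGradEnorm {i j : ι} (hij : i ≠ j) {x : EuclideanSpace ℝ ι}
    (hi : DifferentiableAt ℝ (u i) x) (hj : DifferentiableAt ℝ (u j) x) :
    ‖fderiv ℝ (fun y => u i y + u j y) x
        (EuclideanSpace.single i 1 + EuclideanSpace.single j 1)‖ₑ ≤ symmGradEnorm u x :=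
  calc _ ≤ ‖2 * fderiv ℝ (fun y => u i y + u j y) x
          (EuclideanSpace.single i 1 + EuclideanSpace.single j 1)‖ₑ := by
        rw [enorm_mul]; exact le_mul_of_one_le_left' (by rw [Real.enorm_eq_ofReal_abs]; norm_num)
    _ ≤ ∑ k ∈ {i, j}, ∑ l ∈ {i, j}, ‖symmGrad u k l x‖ₑ := by
        rw [two_mul_fderiv_add_eq_sum_symmGrad hij hi hj]
        exact (enorm_sum_le _ _).trans (sum_le_sum fun k _ => enorm_sum_le _ _)
    _ ≤ symmGradEnorm u x :=
        (sum_le_sum fun k _ => sum_le_sum_of_subset (subset_univ _)).trans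
          (sum_le_sum_of_subset (subset_univ _))

theorem enorm_le_lineLIntegral_symmGradEnorm_single {j : ι} (hu : ContDiff ℝ 1 (u j))
    (hs : HasCompactSupport (u j)) (x : EuclideanSpace ℝ ι) :
    ‖u j x‖ₑ ≤ lineLIntegral (symmGradEnorm u) (EuclideanSpace.single j 1) x :=
  (enorm_le_lineLIntegral_enorm_fderiv hu hs (by simp) x).trans
    (lineLIntegral_mono (enorm_fderiv_single_le_symmGradEnorm j) _ x)

theorem enorm_le_lineLIntegral_symmGradEnorm_add {i j : ι} (hij : i ≠ j)
    (hui : ContDiff ℝ 1 (u i)) (huj : ContDiff ℝ 1 (u j))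
    (hsi : HasCompactSupport (u i)) (hsj : HasCompactSupport (u j)) (x : EuclideanSpace ℝ ι) :
    ‖u j x‖ₑ ≤
      lineLIntegral (symmGradEnorm u) (EuclideanSpace.single i 1 + EuclideanSpace.single j 1) x +
        lineLIntegral (symmGradEnorm u) (EuclideanSpace.single i 1) x := by
  have hdir : EuclideanSpace.single i (1 : ℝ) + EuclideanSpace.single j 1 ≠ 0 := fun h => by
    simpa [hij] using congrArg (· i) h
  calc ‖u j x‖ₑ = ‖(u i x + u j x) - u i x‖ₑ := by rw [add_sub_cancel_left]
    _ ≤ ‖u i x + u j x‖ₑ + ‖u i x‖ₑ := enorm_sub_le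
    _ ≤ _ := by
      gcongr
      · refine (enorm_le_lineLIntegral_enorm_fderiv (hui.add huj) (hsi.add hsj) hdir x).trans
          (lineLIntegral_mono (fun y => ?_) _ x)
        exact enorm_fderiv_add_le_symmGradEnorm hij (hui.differentiable one_ne_zero y)
          (huj.differentiable one_ne_zero y)
      · exact enorm_le_lineLIntegral_symmGradEnorm_single hui hsi x

theorem continuous_symmGrad (hu : ∀ j, ContDiff ℝ 1 (u j)) (k l : ι) :
    Continuous (symmGrad u k l) := by
  have hd (j : ι) (v : EuclideanSpace ℝ ι) : Continuous fun x => fderiv ℝ (u j) x v :=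
    ((hu j).continuous_fderiv one_ne_zero).clm_apply continuous_const
  exact (hd l _).add (hd k _)

theorem integrable_symmGrad (hu : ∀ j, ContDiff ℝ 1 (u j)) (hs : ∀ j, HasCompactSupport (u j))
    (k l : ι) : Integrable (symmGrad u k l) :=
  (continuous_symmGrad hu k l).integrable_of_hasCompactSupport
    (((hs l).fderiv_apply ℝ _).add ((hs k).fderiv_apply ℝ _))

theorem measurable_symmGradEnorm (hu : ∀ j, ContDiff ℝ 1 (u j)) :
    Measurable (symmGradEnorm u) :=
  Finset.measurable_sum _ fun k _ => Finset.measurable_sum _ fun l _ =>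
    (continuous_symmGrad hu k l).measurable.enorm

theorem lintegral_enorm_rpow_le_symmGradEnorm {p : ℝ}
    (hp : Real.HolderConjugate (Fintype.card ι) p) (hu : ∀ j, ContDiff ℝ 1 (u j))
    (hs : ∀ j, HasCompactSupport (u j)) (j : ι) :
    ∫⁻ x, ‖u j x‖ₑ ^ p ≤ 2 ^ (Fintype.card ι - 1) * (∫⁻ x, symmGradEnorm u x) ^ p := by
  refine lintegral_rpow_le_of_le_lineLIntegral hp ?_ j
    (enorm_le_lineLIntegral_symmGradEnorm_single (hu j) (hs j))
    (fun i hij => enorm_le_lineLIntegral_symmGradEnorm_add hij (hu i) (hu j) (hs i) (hs j))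
  exact measurable_symmGradEnorm hu

theorem lintegral_symmGradEnorm (hu : ∀ j, ContDiff ℝ 1 (u j))
    (hs : ∀ j, HasCompactSupport (u j)) :
    ∫⁻ x, symmGradEnorm u x = ENNReal.ofReal (∑ k, ∑ l, ∫ x, |symmGrad u k l x|) := by
  have hmeas (k l : ι) : Measurable fun x => ‖symmGrad u k l x‖ₑ :=
    (continuous_symmGrad hu k l).measurable.enorm
  have hint_nonneg (k l : ι) : 0 ≤ ∫ x, |symmGrad u k l x| := integral_nonneg fun _ => abs_nonneg _
  simp only [symmGradEnorm]
  rw [lintegral_finsetSum _ fun k _ => Finset.measurable_sum _ fun l _ => hmeas k l,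
    ENNReal.ofReal_sum_of_nonneg fun k _ => sum_nonneg fun l _ => hint_nonneg k l]
  refine sum_congr rfl fun k _ => ?_
  rw [lintegral_finsetSum _ fun l _ => hmeas k l,
    ENNReal.ofReal_sum_of_nonneg fun l _ => hint_nonneg k l]
  refine sum_congr rfl fun l _ => ?_
  simp only [← Real.norm_eq_abs]
  exact (ofReal_integral_norm_eq_lintegral_enorm (integrable_symmGrad hu hs k l)).symm

theorem integral_rpow_rpow_inv_le_sum_integral_symmGrad {p : ℝ}
    (hp : Real.HolderConjugate (Fintype.card ι) p) (hu : ∀ j, ContDiff ℝ 1 (u j))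
    (hs : ∀ j, HasCompactSupport (u j)) (j : ι) :
    (∫ x, |u j x| ^ p) ^ p⁻¹ ≤
      2 ^ (Fintype.card ι - 1) * ∑ k, ∑ l, ∫ x, |symmGrad u k l x| := by
  set R := ∑ k, ∑ l, ∫ x, |symmGrad u k l x|
  have hR : 0 ≤ R := sum_nonneg fun k _ => sum_nonneg fun l _ =>
    integral_nonneg fun _ => abs_nonneg _
  have hp0 : 0 < p := hp.symm.pos
  have hp' : ENNReal.ofReal p ≠ 0 := by simpa using hp0
  have hLp : ENNReal.ofReal ((∫ x, |u j x| ^ p) ^ p⁻¹) = (∫⁻ x, ‖u j x‖ₑ ^ p) ^ p⁻¹ := by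
    have := ((hu j).continuous.memLp_of_hasCompactSupport (μ := volume) (p := .ofReal p)
      (hs j)).eLpNorm_eq_integral_rpow_norm hp' ENNReal.ofReal_ne_top
    rw [eLpNorm_eq_lintegral_rpow_enorm_toReal hp' ENNReal.ofReal_ne_top,
      ENNReal.toReal_ofReal hp0.le] at this
    simpa [Real.norm_eq_abs, one_div] using this.symm
  rw [← ENNReal.ofReal_le_ofReal_iff (by positivity), hLp]
  calc (∫⁻ x, ‖u j x‖ₑ ^ p) ^ p⁻¹
      ≤ (2 ^ (Fintype.card ι - 1) * (∫⁻ x, symmGradEnorm u x) ^ p) ^ p⁻¹ := by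
        gcongr; exact lintegral_enorm_rpow_le_symmGradEnorm hp hu hs j
    _ = (2 ^ (Fintype.card ι - 1)) ^ p⁻¹ * ENNReal.ofReal R := by
        rw [ENNReal.mul_rpow_of_nonneg _ _ (by positivity), ENNReal.rpow_rpow_inv hp0.ne',
          lintegral_symmGradEnorm hu hs]
    _ ≤ 2 ^ (Fintype.card ι - 1) * ENNReal.ofReal R := by
        gcongr
        simpa using ENNReal.rpow_le_rpow_of_exponent_le (one_le_pow₀ (M₀ := ℝ≥0∞) one_le_two)
          (inv_le_one_of_one_le₀ hp.symm.lt.le : p⁻¹ ≤ 1)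
    _ = ENNReal.ofReal (2 ^ (Fintype.card ι - 1) * R) := by
        rw [ENNReal.ofReal_mul (by positivity)]; simp

end Euclidean

/-- The endpoint Korn–Sobolev inequality of Strauss in the Euclidean case. -/
theorem stmt16 (n : ℕ) (hn : 2 ≤ n) :
    ∃ C : ℝ, ∀ u : Fin n → EuclideanSpace ℝ (Fin n) → ℝ,
      (∀ j, ContDiff ℝ (⊤ : ℕ∞) (u j)) → (∀ j, HasCompactSupport (u j)) →
      ∑ j : Fin n, (∫ x, |u j x| ^ ((n : ℝ) / ((n : ℝ) - 1))) ^
          (((n : ℝ) - 1) / (n : ℝ)) ≤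
        C * ∑ i : Fin n, ∑ j : Fin n, ∫ x,
          |fderiv ℝ (u j) x (EuclideanSpace.single i 1) +
            fderiv ℝ (u i) x (EuclideanSpace.single j 1)| := by
  refine ⟨n * 2 ^ (n - 1), fun u hu hs => ?_⟩
  have hp : Real.HolderConjugate (Fintype.card (Fin n)) ((n : ℝ) / ((n : ℝ) - 1)) := by
    rw [Fintype.card_fin]
    exact .conjExponent (by exact_mod_cast hn)
  have hu1 (j : Fin n) : ContDiff ℝ 1 (u j) := (hu j).of_le (by exact_mod_cast le_top)
  calc ∑ j : Fin n, (∫ x, |u j x| ^ ((n : ℝ) / ((n : ℝ) - 1))) ^ (((n : ℝ) - 1) / (n : ℝ))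
      ≤ ∑ _j : Fin n, 2 ^ (n - 1) * ∑ k, ∑ l, ∫ x, |symmGrad u k l x| := by
        gcongr with j
        simpa [inv_div] using integral_rpow_rpow_inv_le_sum_integral_symmGrad hp hu1 hs j
    _ = _ := by simp [symmGrad, mul_assoc]
end
end

section
/- Let n ≥ 2 be an integer and let p be a real number with 1 ≤ p < n/(n−1). There is a constant C = C(n, p) such that for every smooth compactly supported function u : ℝⁿ → ℝ, (∫_{ℝⁿ} (|x|^{n−1} |u(x)|)^p |x|^{−n} dx)^{1/p} ≤ C ∑_{j=1}^{n} ‖∂_j u‖_{L¹(ℝⁿ)}. In particular (taking p = 1), ∫_{ℝⁿ} |u(x)|/|x| dx ≤ C ∑_{j=1}^{n} ‖∂_j u‖_{L¹(ℝⁿ)}. -/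
/-!
Along a ray, `u x = -∫₁^∞ (d/dt) u (t • x) dt`, so `|u x| / |x| ≤ ∫₁^∞ |Du (t • x)| dt`;
integrating in `x` and rescaling `x ↦ t • x` (Jacobian `t⁻ᵈ`) gives the Hardy inequality
`∫ |u| / |x| ≤ (d - 1)⁻¹ ∫ |Du|`. With `α = d - (d - 1) p ∈ (0, 1]` and `q = d / (d - 1)`,
`|u|ᵖ |x|^(-α) = (|u| / |x|)^α (|u|^q)^(1 - α)`, so Hölder's inequality interpolates between
Hardy's inequality and the Gagliardo–Nirenberg–Sobolev inequality `∫ |u|^q ≤ C (∫ |Du|)^q`.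
Finally `‖Du‖ ≤ ∑ⱼ |∂ⱼ u|`.
-/

open MeasureTheory Set Module
open scoped ENNReal NNReal

section RadialFTC

variable {E F : Type*} [NormedAddCommGroup E] [NormedSpace ℝ E]
  [NormedAddCommGroup F] [NormedSpace ℝ F] [CompleteSpace F]

theorem HasCompactSupport.enorm_le_lintegral_Ioi_deriv {f : ℝ → F} (hf : ContDiff ℝ 1 f)
    (h2f : HasCompactSupport f) (a : ℝ) : ‖f a‖ₑ ≤ ∫⁻ t in Ioi a, ‖deriv f t‖ₑ := by
  rw [← enorm_neg, ← h2f.integral_Ioi_deriv_eq hf a]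
  exact enorm_integral_le_lintegral_enorm _

theorem HasCompactSupport.enorm_le_lintegral_Ioi_fderiv_smul {u : E → F} (hu : ContDiff ℝ 1 u)
    (h2u : HasCompactSupport u) {x : E} (hx : x ≠ 0) :
    ‖u x‖ₑ ≤ (∫⁻ t in Ioi (1 : ℝ), ‖fderiv ℝ u (t • x)‖ₑ) * ‖x‖ₑ := by
  have hderiv (t : ℝ) : deriv (fun s : ℝ ↦ u (s • x)) t = fderiv ℝ u (t • x) x := by
    simpa [Function.comp_def] using ((hu.differentiable one_ne_zero (t • x)).hasFDerivAt
      |>.comp_hasDerivAt t ((hasDerivAt_id t).smul_const x)).deriv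
  calc ‖u x‖ₑ = ‖(fun s : ℝ ↦ u (s • x)) 1‖ₑ := by simp only [one_smul]
    _ ≤ ∫⁻ t in Ioi 1, ‖deriv (fun s : ℝ ↦ u (s • x)) t‖ₑ :=
      (h2u.comp_isClosedEmbedding (isClosedEmbedding_smul_left hx)).enorm_le_lintegral_Ioi_deriv
        (hu.comp (contDiff_id.smul contDiff_const)) 1
    _ ≤ ∫⁻ t in Ioi 1, ‖fderiv ℝ u (t • x)‖ₑ * ‖x‖ₑ :=
      lintegral_mono fun t ↦ hderiv t ▸ ContinuousLinearMap.le_opENorm _ _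
    _ = (∫⁻ t in Ioi 1, ‖fderiv ℝ u (t • x)‖ₑ) * ‖x‖ₑ := lintegral_mul_const' _ _ enorm_ne_top

end RadialFTC

theorem lintegral_Ioi_one_ofReal_inv_pow {d : ℕ} (hd : 1 < d) :
    ∫⁻ t in Ioi (1 : ℝ), ENNReal.ofReal (t ^ d)⁻¹ = ENNReal.ofReal ((d - 1 : ℝ)⁻¹) := by
  have hlt : -(d : ℝ) < -1 := by
    have : (1 : ℝ) < d := Nat.one_lt_cast.2 hd
    linarith
  have hpow : EqOn (fun t : ℝ ↦ ENNReal.ofReal (t ^ d)⁻¹)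
      (fun t ↦ ENNReal.ofReal (t ^ (-(d : ℝ)))) (Ioi 1) := fun t ht ↦ by
    simp only [Real.rpow_neg (zero_le_one.trans ht.out.le), Real.rpow_natCast]
  rw [setLIntegral_congr_fun measurableSet_Ioi hpow, ← ofReal_integral_eq_lintegral_ofReal
    (integrableOn_Ioi_rpow_of_lt hlt zero_lt_one)
    (ae_restrict_of_forall_mem measurableSet_Ioi fun t ht ↦
      Real.rpow_nonneg (zero_le_one.trans ht.out.le) _),
    integral_Ioi_rpow_of_lt hlt zero_lt_one, Real.one_rpow]
  congr 1
  rw [neg_add_eq_sub, ← neg_sub, neg_div_neg_eq, one_div]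

section Hardy

variable {E F : Type*} [NormedAddCommGroup E] [NormedSpace ℝ E] [FiniteDimensional ℝ E]
  [MeasurableSpace E] [BorelSpace E] (μ : Measure E) [μ.IsAddHaarMeasure]
  [NormedAddCommGroup F] [NormedSpace ℝ F] [CompleteSpace F]

theorem lintegral_comp_smul_of_pos (f : E → ℝ≥0∞) {s : ℝ} (hs : 0 < s) :
    ∫⁻ x, f (s • x) ∂μ = ENNReal.ofReal (s ^ finrank ℝ E)⁻¹ * ∫⁻ x, f x ∂μ := by
  let e : E ≃ᵐ E := (Homeomorph.smulOfNeZero s hs.ne').toMeasurableEquiv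
  rw [show (fun x ↦ f (s • x)) = fun x ↦ f (e x) from rfl, ← lintegral_map_equiv f e,
    show ⇑e = (s • ·) from rfl, Measure.map_addHaar_smul μ hs.ne',
    lintegral_smul_measure, abs_of_pos (by positivity), smul_eq_mul]

theorem lintegral_enorm_div_enorm_le_lintegral_fderiv (hd : 1 < finrank ℝ E) {u : E → F}
    (hu : ContDiff ℝ 1 u) (h2u : HasCompactSupport u) :
    ∫⁻ x, ‖u x‖ₑ / ‖x‖ₑ ∂μ ≤
      ENNReal.ofReal ((finrank ℝ E - 1 : ℝ)⁻¹) * ∫⁻ x, ‖fderiv ℝ u x‖ₑ ∂μ := by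
  have : Nontrivial E := Module.nontrivial_of_finrank_pos (zero_lt_one.trans hd)
  have hcont : Continuous (fderiv ℝ u) := hu.continuous_fderiv one_ne_zero
  calc ∫⁻ x, ‖u x‖ₑ / ‖x‖ₑ ∂μ
      ≤ ∫⁻ x, (∫⁻ t in Ioi (1 : ℝ), ‖fderiv ℝ u (t • x)‖ₑ) ∂μ := by
        refine lintegral_mono_ae ((Measure.ae_ne μ 0).mono fun x hx ↦ ?_)
        exact ENNReal.div_le_of_le_mul (h2u.enorm_le_lintegral_Ioi_fderiv_smul hu hx)
    _ = ∫⁻ t in Ioi (1 : ℝ), ∫⁻ x, ‖fderiv ℝ u (t • x)‖ₑ ∂μ :=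
        lintegral_lintegral_swap ((hcont.comp (continuous_snd.smul continuous_fst)).enorm
          |>.measurable.aemeasurable)
    _ = ∫⁻ t in Ioi (1 : ℝ), ENNReal.ofReal (t ^ finrank ℝ E)⁻¹ * ∫⁻ x, ‖fderiv ℝ u x‖ₑ ∂μ :=
        setLIntegral_congr_fun measurableSet_Ioi fun t ht ↦
          lintegral_comp_smul_of_pos μ (fun x ↦ ‖fderiv ℝ u x‖ₑ) (zero_lt_one.trans ht)
    _ = ENNReal.ofReal ((finrank ℝ E - 1 : ℝ)⁻¹) * ∫⁻ x, ‖fderiv ℝ u x‖ₑ ∂μ := by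
        rw [lintegral_mul_const'' _ (by fun_prop), lintegral_Ioi_one_ofReal_inv_pow hd]

theorem ENNReal.rpow_add_mul_div_rpow_eq (a b : ℝ≥0∞) {θ q : ℝ} (hθ : 0 ≤ θ)
    (hq : 0 ≤ q * (1 - θ)) :
    a ^ (θ + q * (1 - θ)) / b ^ θ = (a / b) ^ θ * (a ^ q) ^ (1 - θ) := by
  rw [ENNReal.div_rpow_of_nonneg _ _ hθ, ← ENNReal.rpow_mul, ENNReal.rpow_add_of_nonneg _ _ hθ hq,
    div_eq_mul_inv, div_eq_mul_inv]
  ring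

theorem exists_rpow_lintegral_rpow_div_rpow_le (hd : 1 < finrank ℝ E) {p : ℝ} (hp1 : 1 ≤ p)
    (hp2 : p < (finrank ℝ E : ℝ) / (finrank ℝ E - 1)) :
    ∃ C : ℝ≥0, ∀ u : E → F, ContDiff ℝ 1 u → HasCompactSupport u →
      (∫⁻ x, ‖u x‖ₑ ^ p / ‖x‖ₑ ^ (finrank ℝ E - (finrank ℝ E - 1) * p) ∂μ) ^ (1 / p) ≤
        C * ∫⁻ x, ‖fderiv ℝ u x‖ₑ ∂μ := by
  set d : ℝ := (finrank ℝ E : ℝ)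
  have hd1 : 0 < d - 1 := by
    have : (1 : ℝ) < d := Nat.one_lt_cast.2 hd
    linarith
  set q := d / (d - 1)
  have hq : d.HolderConjugate q := (Real.holderConjugate_iff_eq_conjExponent (by linarith)).2 rfl
  set α := d - (d - 1) * p
  have hα : 0 < α := by
    have := (lt_div_iff₀ hd1).1 hp2
    linarith
  have h1α : 0 ≤ 1 - α := by nlinarith
  have hqα : 0 ≤ q * (1 - α) := mul_nonneg hq.symm.nonneg h1α
  have hpα : α + q * (1 - α) = p := by
    simp only [α, q]
    field_simp
    ring
  set K : ℝ≥0∞ := ENNReal.ofReal (d - 1)⁻¹ ^ α *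
    (lintegralPowLePowLIntegralFDerivConst μ q : ℝ≥0∞) ^ (1 - α)
  have hK : K ^ (1 / p) ≠ ⊤ := by finiteness
  refine ⟨(K ^ (1 / p)).toNNReal, fun u hu h2u ↦ ?_⟩
  set D := ∫⁻ x, ‖fderiv ℝ u x‖ₑ ∂μ
  have hcu : Continuous u := hu.continuous
  have hDp : D ^ p = D ^ α * D ^ (q * (1 - α)) := by
    rw [← ENNReal.rpow_add_of_nonneg _ _ hα.le hqα, hpα]
  have key : ∫⁻ x, ‖u x‖ₑ ^ p / ‖x‖ₑ ^ α ∂μ ≤ K * D ^ p :=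
    calc ∫⁻ x, ‖u x‖ₑ ^ p / ‖x‖ₑ ^ α ∂μ
        = ∫⁻ x, (‖u x‖ₑ / ‖x‖ₑ) ^ α * (‖u x‖ₑ ^ q) ^ (1 - α) ∂μ := by
          simp only [← ENNReal.rpow_add_mul_div_rpow_eq _ _ hα.le hqα, hpα]
      _ ≤ (∫⁻ x, ‖u x‖ₑ / ‖x‖ₑ ∂μ) ^ α * (∫⁻ x, ‖u x‖ₑ ^ q ∂μ) ^ (1 - α) :=
          ENNReal.lintegral_mul_norm_pow_le (by fun_prop) (by fun_prop) hα.le h1α (by ring)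
      _ ≤ (ENNReal.ofReal (d - 1)⁻¹ * D) ^ α *
            (lintegralPowLePowLIntegralFDerivConst μ q * D ^ q) ^ (1 - α) := by
          gcongr
          · exact lintegral_enorm_div_enorm_le_lintegral_fderiv μ hd hu h2u
          · exact lintegral_pow_le_pow_lintegral_fderiv μ hu h2u hq
      _ = K * D ^ p := by
          rw [ENNReal.mul_rpow_of_nonneg _ _ hα.le, ENNReal.mul_rpow_of_nonneg _ _ h1α,
            ← ENNReal.rpow_mul, hDp]
          ring
  calc (∫⁻ x, ‖u x‖ₑ ^ p / ‖x‖ₑ ^ α ∂μ) ^ (1 / p) ≤ (K * D ^ p) ^ (1 / p) := by gcongr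
    _ = (K ^ (1 / p)).toNNReal * D := by
      rw [ENNReal.coe_toNNReal hK, ENNReal.mul_rpow_of_nonneg _ _ (by positivity),
        ← ENNReal.rpow_mul, mul_one_div_cancel (by positivity), ENNReal.rpow_one]

end Hardy

theorem EuclideanSpace.opNorm_le_sum_norm_apply_single {ι F : Type*} [Fintype ι] [DecidableEq ι]
    [NormedAddCommGroup F] [NormedSpace ℝ F] (L : EuclideanSpace ℝ ι →L[ℝ] F) :
    ‖L‖ ≤ ∑ j, ‖L (EuclideanSpace.single j 1)‖ := by
  refine L.opNorm_le_bound (by positivity) fun y ↦ ?_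
  calc ‖L y‖ = ‖∑ j, y j • L (EuclideanSpace.single j 1)‖ := by
        conv_lhs => rw [← (EuclideanSpace.basisFun ι ℝ).sum_repr y]
        simp [map_sum]
    _ ≤ ∑ j, ‖y‖ * ‖L (EuclideanSpace.single j 1)‖ := by
        refine norm_sum_le_of_le _ fun j _ ↦ ?_
        rw [norm_smul]
        gcongr
        exact PiLp.norm_apply_le y j
    _ = (∑ j, ‖L (EuclideanSpace.single j 1)‖) * ‖y‖ := by
        rw [Finset.sum_mul]; simp only [mul_comm]

theorem integral_norm_fderiv_le_sum_integral_norm_fderiv_single {ι F : Type*} [Fintype ι]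
    [DecidableEq ι] [NormedAddCommGroup F] [NormedSpace ℝ F]
    (μ : Measure (EuclideanSpace ℝ ι)) [IsFiniteMeasureOnCompacts μ]
    {u : EuclideanSpace ℝ ι → F} (hu : ContDiff ℝ 1 u) (h2u : HasCompactSupport u) :
    ∫ x, ‖fderiv ℝ u x‖ ∂μ ≤ ∑ j, ∫ x, ‖fderiv ℝ u x (EuclideanSpace.single j 1)‖ ∂μ := by
  have hint : Integrable (fderiv ℝ u) μ :=
    (hu.continuous_fderiv one_ne_zero).integrable_of_hasCompactSupport (h2u.fderiv (𝕜 := ℝ))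
  have hint_apply (j : ι) : Integrable (fun x ↦ fderiv ℝ u x (EuclideanSpace.single j 1)) μ :=
    hint.apply_continuousLinearMap _
  rw [← integral_finsetSum _ fun j _ ↦ (hint_apply j).norm]
  exact integral_mono hint.norm (integrable_finsetSum _ fun j _ ↦ (hint_apply j).norm)
    fun x ↦ EuclideanSpace.opNorm_le_sum_norm_apply_single _

theorem ofReal_pow_mul_rpow_mul_rpow_neg {n : ℕ} (hn : 1 ≤ n) {r a p : ℝ} (hr : 0 < r)
    (ha : 0 ≤ a) (hp : 0 ≤ p) :
    ENNReal.ofReal ((r ^ (n - 1) * a) ^ p * r ^ (-(n : ℝ))) =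
      ENNReal.ofReal a ^ p / ENNReal.ofReal r ^ ((n : ℝ) - (n - 1) * p) := by
  have : (r ^ (n - 1) * a) ^ p * r ^ (-(n : ℝ)) = a ^ p / r ^ ((n : ℝ) - (n - 1) * p) := by
    rw [Real.mul_rpow (by positivity) ha, ← Real.rpow_natCast, ← Real.rpow_mul hr.le,
      Nat.cast_sub hn, Nat.cast_one, div_eq_mul_inv, ← Real.rpow_neg hr.le, mul_comm (r ^ _),
      mul_assoc, ← Real.rpow_add hr]
    ring_nf
  rw [this, ENNReal.ofReal_div_of_pos (by positivity), ENNReal.ofReal_rpow_of_nonneg ha hp,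
    ENNReal.ofReal_rpow_of_pos hr]

/-- The endpoint Hardy-type inequality for the gradient in the Euclidean case. -/
theorem stmt18 (n : ℕ) (hn : 2 ≤ n) (p : ℝ) (hp1 : 1 ≤ p)
    (hp2 : p < (n : ℝ) / ((n : ℝ) - 1)) :
    ∃ C : ℝ, ∀ u : EuclideanSpace ℝ (Fin n) → ℝ,
      ContDiff ℝ (⊤ : ℕ∞) u → HasCompactSupport u →
      (∫ x, (‖x‖ ^ (n - 1) * |u x|) ^ p * ‖x‖ ^ (-(n : ℝ))) ^ (1 / p) ≤
        C * ∑ j : Fin n, ∫ x, |fderiv ℝ u x (EuclideanSpace.single j 1)| := by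
  have hdim : finrank ℝ (EuclideanSpace ℝ (Fin n)) = n := finrank_euclideanSpace_fin
  have hdim1 : 1 < finrank ℝ (EuclideanSpace ℝ (Fin n)) := by omega
  obtain ⟨C, hC⟩ := exists_rpow_lintegral_rpow_div_rpow_le (F := ℝ) volume hdim1 hp1
    (by rwa [hdim])
  rw [hdim] at hC
  refine ⟨C, fun u hu h2u ↦ ?_⟩
  have hu1 : ContDiff ℝ 1 u := hu.of_le (by exact_mod_cast le_top)
  have hmu : Measurable u := hu1.continuous.measurable
  have : Nontrivial (EuclideanSpace ℝ (Fin n)) :=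
    Module.nontrivial_of_finrank_pos (R := ℝ) (zero_lt_one.trans hdim1)
  have hD : ∫⁻ x, ‖fderiv ℝ u x‖ₑ ≠ ⊤ :=
    (hu1.continuous_fderiv one_ne_zero).integrable_of_hasCompactSupport
      (h2u.fderiv (𝕜 := ℝ)) |>.hasFiniteIntegral.ne
  have hG : ∫ x, (‖x‖ ^ (n - 1) * |u x|) ^ p * ‖x‖ ^ (-(n : ℝ)) =
      (∫⁻ x, ‖u x‖ₑ ^ p / ‖x‖ₑ ^ ((n : ℝ) - (n - 1) * p)).toReal := by
    rw [integral_eq_lintegral_of_nonneg_ae (.of_forall fun x ↦ by positivity)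
      (by fun_prop : Measurable _).aestronglyMeasurable]
    congr 1
    refine lintegral_congr_ae ((Measure.ae_ne volume 0).mono fun x hx ↦ ?_)
    dsimp only
    rw [← Real.norm_eq_abs, ofReal_pow_mul_rpow_mul_rpow_neg (by omega) (norm_pos_iff.2 hx)
      (norm_nonneg _) (by linarith), ofReal_norm, ofReal_norm]
  calc (∫ x, (‖x‖ ^ (n - 1) * |u x|) ^ p * ‖x‖ ^ (-(n : ℝ))) ^ (1 / p)
      = ((∫⁻ x, ‖u x‖ₑ ^ p / ‖x‖ₑ ^ ((n : ℝ) - (n - 1) * p)) ^ (1 / p)).toReal := by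
        rw [hG, ENNReal.toReal_rpow]
    _ ≤ (C * ∫⁻ x, ‖fderiv ℝ u x‖ₑ).toReal := ENNReal.toReal_mono (by finiteness) (hC u hu1 h2u)
    _ = C * ∫ x, ‖fderiv ℝ u x‖ := by
        rw [ENNReal.toReal_mul, integral_norm_eq_lintegral_enorm (by fun_prop)]; rfl
    _ ≤ C * ∑ j : Fin n, ∫ x, |fderiv ℝ u x (EuclideanSpace.single j 1)| := by
        gcongr
        simpa only [Real.norm_eq_abs] using
          integral_norm_fderiv_le_sum_integral_norm_fderiv_single volume hu1 h2u
end
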